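/- Let U ⊆ ℝ² be a nonempty connected open set and let V : U → ℝ be smooth. If V is compatible with the Killing tensor K(β) on U (i.e., the Bertrand–Darboux one-form of V and K(β) is closed on U) for every β ∈ ℝ⁶, then V is constant on U. In other words, a potential compatible with the full six-dimensional space of Killing two-tensors of the Euclidean plane is necessarily constant. -/

import Mathlib

open Real

/-- Partial derivative with respect to the first Cartesian coordinate. -/
noncomputable def pd1 (f : ℝ × ℝ → ℝ) (x : ℝ × ℝ) : ℝ :=
  deriv (fun t => f (t, x.2)) x.1

/-- Partial derivative with respect to the second Cartesian coordinate. -/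
noncomputable def pd2 (f : ℝ × ℝ → ℝ) (x : ℝ × ℝ) : ℝ :=
  deriv (fun t => f (x.1, t)) x.2

/-- Component `K¹¹` of the general Killing two-tensor of the Euclidean plane. -/
def K11 (β : Fin 6 → ℝ) (x : ℝ × ℝ) : ℝ := β 0 + 2 * β 3 * x.2 + β 5 * x.2 ^ 2

/-- Component `K¹² = K²¹` of the general Killing two-tensor of the Euclidean plane. -/
def K12 (β : Fin 6 → ℝ) (x : ℝ × ℝ) : ℝ := β 2 - β 3 * x.1 - β 4 * x.2 - β 5 * x.1 * x.2

/-- Component `K²²` of the general Killing two-tensor of the Euclidean plane. -/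
def K22 (β : Fin 6 → ℝ) (x : ℝ × ℝ) : ℝ := β 1 + 2 * β 4 * x.1 + β 5 * x.1 ^ 2

/-- `V` is compatible with `K(β)` on `U` : the Bertrand–Darboux one-form
`(K¹¹∂₁V + K¹²∂₂V)dx₁ + (K¹²∂₁V + K²²∂₂V)dx₂` is closed on `U`. -/
def Compatible (β : Fin 6 → ℝ) (V : ℝ × ℝ → ℝ) (U : Set (ℝ × ℝ)) : Prop :=
  ∀ x ∈ U,
    pd2 (fun y => K11 β y * pd1 V y + K12 β y * pd2 V y) x
      = pd1 (fun y => K12 β y * pd1 V y + K22 β y * pd2 V y) x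

/-!
For `V ∈ C²` the closedness of the Bertrand–Darboux form of `K(β)` is, at each point, an
identity linear in `β` involving the first and second partials of `V`. The constant tensors
`β = e₀, e₁, e₂` give `∂₁∂₂V = ∂₂∂₁V = 0` and `∂₁²V = ∂₂²V`; with these, the tensors
`β = e₃, e₄` reduce to `∂₁V = 0` and `∂₂V = 0`. So `V` has vanishing derivative on the
connected open set `U`.
-/

section PartialDerivatives

variable {f g : ℝ × ℝ → ℝ} {x : ℝ × ℝ}

lemma hasDerivAt_horizontal (hf : DifferentiableAt ℝ f x) :
    HasDerivAt (fun t => f (t, x.2)) (fderiv ℝ f x (1, 0)) x.1 :=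
  hf.hasFDerivAt.comp_hasDerivAt_of_eq x.1 ((hasDerivAt_id x.1).prodMk (hasDerivAt_const x.1 x.2))
    rfl

lemma hasDerivAt_vertical (hf : DifferentiableAt ℝ f x) :
    HasDerivAt (fun t => f (x.1, t)) (fderiv ℝ f x (0, 1)) x.2 :=
  hf.hasFDerivAt.comp_hasDerivAt_of_eq x.2 ((hasDerivAt_const x.2 x.1).prodMk (hasDerivAt_id x.2))
    rfl

lemma pd1_eq_fderiv (hf : DifferentiableAt ℝ f x) : pd1 f x = fderiv ℝ f x (1, 0) :=
  (hasDerivAt_horizontal hf).deriv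

lemma pd2_eq_fderiv (hf : DifferentiableAt ℝ f x) : pd2 f x = fderiv ℝ f x (0, 1) :=
  (hasDerivAt_vertical hf).deriv

lemma pd1_add (hf : DifferentiableAt ℝ f x) (hg : DifferentiableAt ℝ g x) :
    pd1 (f + g) x = pd1 f x + pd1 g x :=
  deriv_fun_add (hasDerivAt_horizontal hf).differentiableAt
    (hasDerivAt_horizontal hg).differentiableAt

lemma pd2_add (hf : DifferentiableAt ℝ f x) (hg : DifferentiableAt ℝ g x) :
    pd2 (f + g) x = pd2 f x + pd2 g x :=
  deriv_fun_add (hasDerivAt_vertical hf).differentiableAt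
    (hasDerivAt_vertical hg).differentiableAt

lemma pd1_mul (hf : DifferentiableAt ℝ f x) (hg : DifferentiableAt ℝ g x) :
    pd1 (f * g) x = pd1 f x * g x + f x * pd1 g x :=
  deriv_fun_mul (hasDerivAt_horizontal hf).differentiableAt
    (hasDerivAt_horizontal hg).differentiableAt

lemma pd2_mul (hf : DifferentiableAt ℝ f x) (hg : DifferentiableAt ℝ g x) :
    pd2 (f * g) x = pd2 f x * g x + f x * pd2 g x :=
  deriv_fun_mul (hasDerivAt_vertical hf).differentiableAt
    (hasDerivAt_vertical hg).differentiableAt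

lemma differentiableAt_pd1 (hf : ContDiffAt ℝ 2 f x) : DifferentiableAt ℝ (pd1 f) x := by
  have hfd : DifferentiableAt ℝ (fun y => fderiv ℝ f y (1, 0)) x :=
    ((hf.fderiv_right (m := 1) (by norm_num)).differentiableAt (by norm_num)).clm_apply
      (differentiableAt_const _)
  refine hfd.congr_of_eventuallyEq ?_
  filter_upwards [hf.eventually (by simp)] with y hy
  exact pd1_eq_fderiv (hy.differentiableAt (by norm_num))

lemma differentiableAt_pd2 (hf : ContDiffAt ℝ 2 f x) : DifferentiableAt ℝ (pd2 f) x := by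
  have hfd : DifferentiableAt ℝ (fun y => fderiv ℝ f y (0, 1)) x :=
    ((hf.fderiv_right (m := 1) (by norm_num)).differentiableAt (by norm_num)).clm_apply
      (differentiableAt_const _)
  refine hfd.congr_of_eventuallyEq ?_
  filter_upwards [hf.eventually (by simp)] with y hy
  exact pd2_eq_fderiv (hy.differentiableAt (by norm_num))

lemma fderiv_eq_zero_of_pd1_eq_zero_of_pd2_eq_zero (hf : DifferentiableAt ℝ f x)
    (h1 : pd1 f x = 0) (h2 : pd2 f x = 0) : fderiv ℝ f x = 0 := by
  rw [pd1_eq_fderiv hf] at h1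
  rw [pd2_eq_fderiv hf] at h2
  ext <;> simpa

end PartialDerivatives

lemma deriv_quadratic (a b c s : ℝ) :
    deriv (fun t => a + b * t + c * t ^ 2) s = b + 2 * c * s := by
  have h : HasDerivAt (fun t => a + b * t + c * t ^ 2) (b * 1 + c * (↑2 * s ^ (2 - 1))) s :=
    (((hasDerivAt_id' s).const_mul b).const_add a).add ((hasDerivAt_pow 2 s).const_mul c)
  rw [h.deriv]
  ring

section KillingTensor

variable (β : Fin 6 → ℝ) (x : ℝ × ℝ)

lemma pd2_K11 : pd2 (K11 β) x = 2 * β 3 + 2 * β 5 * x.2 :=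
  deriv_quadratic (β 0) (2 * β 3) (β 5) x.2

lemma pd1_K22 : pd1 (K22 β) x = 2 * β 4 + 2 * β 5 * x.1 :=
  deriv_quadratic (β 1) (2 * β 4) (β 5) x.1

lemma pd1_K12 : pd1 (K12 β) x = -β 3 - β 5 * x.2 := by
  have h : (fun t => K12 β (t, x.2))
      = fun t => (β 2 - β 4 * x.2) + (-β 3 - β 5 * x.2) * t + 0 * t ^ 2 := by
    funext t; simp only [K12]; ring
  rw [pd1, h, deriv_quadratic]
  ring

lemma pd2_K12 : pd2 (K12 β) x = -β 4 - β 5 * x.1 := by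
  have h : (fun t => K12 β (x.1, t))
      = fun t => (β 2 - β 3 * x.1) + (-β 4 - β 5 * x.1) * t + 0 * t ^ 2 := by
    funext t; simp only [K12]; ring
  rw [pd2, h, deriv_quadratic]
  ring

lemma differentiable_K11 : Differentiable ℝ (K11 β) := by unfold K11; fun_prop

lemma differentiable_K12 : Differentiable ℝ (K12 β) := by unfold K12; fun_prop

lemma differentiable_K22 : Differentiable ℝ (K22 β) := by unfold K22; fun_prop

end KillingTensor

variable {β : Fin 6 → ℝ} {V : ℝ × ℝ → ℝ} {U : Set (ℝ × ℝ)} {x : ℝ × ℝ}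

lemma Compatible.bertrandDarboux_expansion (h : Compatible β V U) (hx : x ∈ U)
    (hV : ContDiffAt ℝ 2 V x) :
    3 * (β 3 + β 5 * x.2) * pd1 V x - 3 * (β 4 + β 5 * x.1) * pd2 V x
      + K11 β x * pd2 (pd1 V) x + K12 β x * (pd2 (pd2 V) x - pd1 (pd1 V) x)
      - K22 β x * pd1 (pd2 V) x = 0 := by
  have h1 := differentiableAt_pd1 hV
  have h2 := differentiableAt_pd2 hV
  have hK11 := differentiable_K11 β x
  have hK12 := differentiable_K12 β x
  have hK22 := differentiable_K22 β x
  have hx : pd2 (K11 β * pd1 V + K12 β * pd2 V) x = pd1 (K12 β * pd1 V + K22 β * pd2 V) x :=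
    h x hx
  rw [pd2_add (hK11.mul h1) (hK12.mul h2), pd1_add (hK12.mul h1) (hK22.mul h2), pd2_mul hK11 h1,
    pd2_mul hK12 h2, pd1_mul hK12 h1, pd1_mul hK22 h2, pd2_K11, pd2_K12, pd1_K12, pd1_K22] at hx
  linear_combination hx

lemma pd1_eq_zero_and_pd2_eq_zero_of_forall_compatible (h : ∀ β, Compatible β V U)
    (hx : x ∈ U) (hV : ContDiffAt ℝ 2 V x) : pd1 V x = 0 ∧ pd2 V x = 0 := by
  have e := fun i => (h (Pi.single i 1)).bertrandDarboux_expansion hx hV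
  have e0 := e 0
  have e1 := e 1
  have e2 := e 2
  have e3 := e 3
  have e4 := e 4
  simp only [Fin.isValue, ne_eq, Fin.reduceEq, not_false_eq_true, Pi.single_eq_of_ne, zero_mul,
    add_zero, mul_zero, sub_self, K11, Pi.single_eq_same, one_mul, zero_add, K12, K22, one_ne_zero,
    sub_zero, zero_ne_one, zero_sub, neg_eq_zero, mul_one, neg_mul] at e0 e1 e2 e3 e4
  constructor
  · linear_combination e3 / 3 - (2 * x.2 / 3) * e0 + (x.1 / 3) * e2
  · linear_combination -e4 / 3 - (x.2 / 3) * e2 - (2 * x.1 / 3) * e1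

theorem compatible_with_all_killing_tensors_imp_constant_general
    (U : Set (ℝ × ℝ)) (hconn : IsConnected U) (hopen : IsOpen U)
    (V : ℝ × ℝ → ℝ) (hV : ContDiffOn ℝ (⊤ : ℕ∞) V U)
    (hcompat : ∀ β : Fin 6 → ℝ, Compatible β V U) :
    ∀ x ∈ U, ∀ y ∈ U, V x = V y := by
  have hV2 : ∀ x ∈ U, ContDiffAt ℝ 2 V x := fun x hx =>
    (hV.contDiffAt (hopen.mem_nhds hx)).of_le (WithTop.coe_le_coe.mpr le_top)
  have hgrad : U.EqOn (fderiv ℝ V) 0 := fun x hx =>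
    have ⟨h1, h2⟩ := pd1_eq_zero_and_pd2_eq_zero_of_forall_compatible hcompat hx (hV2 x hx)
    fderiv_eq_zero_of_pd1_eq_zero_of_pd2_eq_zero ((hV2 x hx).differentiableAt (by norm_num)) h1 h2
  intro x hx y hy
  exact hopen.is_const_of_fderiv_eq_zero hconn.isPreconnected
    (fun z hz => ((hV2 z hz).differentiableAt (by norm_num)).differentiableWithinAt) hgrad hx hy

/-- A smooth potential on a nonempty connected open set `U ⊆ ℝ²` that is
compatible with the full six-dimensional space of Killing two-tensors of the
Euclidean plane is necessarily constant. -/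
theorem compatible_with_all_killing_tensors_imp_constant
    (U : Set (ℝ × ℝ)) (hne : U.Nonempty) (hconn : IsConnected U) (hopen : IsOpen U)
    (V : ℝ × ℝ → ℝ) (hV : ContDiffOn ℝ (⊤ : ℕ∞) V U)
    (hcompat : ∀ β : Fin 6 → ℝ, Compatible β V U) :
    ∀ x ∈ U, ∀ y ∈ U, V x = V y :=
  compatible_with_all_killing_tensors_imp_constant_general U hconn hopen V hV hcompat
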